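/- arXiv:1009.1977 — 4 statements merged into one kernel-verified Lean document; each statement's English description precedes it below -/
import Mathlib

section
/- Let ⟨D₁, ≤₁, ⊥₁, ⊤₁, ∘₁⟩ and ⟨D₂, ≤₂, ⊥₂, ⊤₂, ∘₂⟩ be qualification domains, and let S = ((D₁ \ {⊥₁}) × (D₂ \ {⊥₂})) ∪ {(⊥₁,⊥₂)} be the carrier of the strict cartesian product. For (d₁,d₂), (e₁,e₂) ∈ S, the strict pair ⟨d₁ ⊓₁ e₁, d₂ ⊓₂ e₂⟩ (which equals (d₁ ⊓₁ e₁, d₂ ⊓₂ e₂) if both components are ≠ ⊥, and (⊥₁,⊥₂) otherwise) belongs to S and is the greatest lower bound of {(d₁,d₂), (e₁,e₂)} within S with respect to the componentwise order: it is a lower bound of both elements, and every (x,y) ∈ S that is a lower bound of both satisfies (x,y) ≤ ⟨d₁ ⊓₁ e₁, d₂ ⊓₂ e₂⟩. -/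
open scoped Classical

section StrictProduct

variable {α β : Type*}

variable (α β) in
def strictCarrier [Bot α] [Bot β] : Set (α × β) :=
  (({(⊥ : α)}ᶜ : Set α) ×ˢ ({(⊥ : β)}ᶜ : Set β)) ∪ {((⊥ : α), (⊥ : β))}

noncomputable def strictPair [Bot α] [Bot β] (a : α) (b : β) : α × β :=
  if a ≠ ⊥ ∧ b ≠ ⊥ then (a, b) else ((⊥ : α), (⊥ : β))

theorem strictPair_mem_strictCarrier [Bot α] [Bot β] (a : α) (b : β) :
    strictPair a b ∈ strictCarrier α β := by
  unfold strictPair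
  split_ifs with h
  · exact Or.inl h
  · exact Or.inr rfl

theorem strictPair_le [PartialOrder α] [OrderBot α] [PartialOrder β] [OrderBot β]
    {a : α} {b : β} {p : α × β} (ha : a ≤ p.1) (hb : b ≤ p.2) : strictPair a b ≤ p := by
  unfold strictPair
  split_ifs
  · exact ⟨ha, hb⟩
  · exact bot_le

/-- An element of the carrier below `(a, ⊥)` or `(⊥, b)` is `(⊥, ⊥)`, so the collapse in
`strictPair` loses no lower bounds. -/
theorem le_strictPair [PartialOrder α] [OrderBot α] [PartialOrder β] [OrderBot β]
    {a : α} {b : β} {x : α × β} (hx : x ∈ strictCarrier α β) (ha : x.1 ≤ a) (hb : x.2 ≤ b) :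
    x ≤ strictPair a b := by
  unfold strictPair
  split_ifs with h
  · exact ⟨ha, hb⟩
  · rcases hx with ⟨hx₁, hx₂⟩ | rfl
    · rcases not_and_or.mp h with h | h <;> rw [not_ne_iff] at h <;> subst h
      · exact absurd (le_bot_iff.mp ha) hx₁
      · exact absurd (le_bot_iff.mp hb) hx₂
    · exact le_rfl

end StrictProduct

theorem strictProduct_glb_general
    {D₁ D₂ : Type*} [Lattice D₁] [BoundedOrder D₁] [Lattice D₂] [BoundedOrder D₂]
    :
    let S : Set (D₁ × D₂) :=
      (({(⊥ : D₁)}ᶜ : Set D₁) ×ˢ ({(⊥ : D₂)}ᶜ : Set D₂)) ∪ {((⊥ : D₁), (⊥ : D₂))}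
    let spair : D₁ → D₂ → D₁ × D₂ := fun a b =>
      if a ≠ ⊥ ∧ b ≠ ⊥ then (a, b) else ((⊥ : D₁), (⊥ : D₂))
    ∀ d e : D₁ × D₂, d ∈ S → e ∈ S →
      spair (d.1 ⊓ e.1) (d.2 ⊓ e.2) ∈ S ∧
      spair (d.1 ⊓ e.1) (d.2 ⊓ e.2) ≤ d ∧
      spair (d.1 ⊓ e.1) (d.2 ⊓ e.2) ≤ e ∧
      (∀ x : D₁ × D₂, x ∈ S → x ≤ d → x ≤ e → x ≤ spair (d.1 ⊓ e.1) (d.2 ⊓ e.2)) := by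
  intro S spair d e _ _
  exact ⟨strictPair_mem_strictCarrier _ _, strictPair_le inf_le_left inf_le_left,
    strictPair_le inf_le_right inf_le_right,
    fun x hx hxd hxe => le_strictPair hx (le_inf hxd.1 hxe.1) (le_inf hxd.2 hxe.2)⟩

/-- In the strict cartesian product of two qualification domains,
the strict pair of componentwise meets is the greatest lower bound. -/
theorem strictProduct_glb
    {D₁ D₂ : Type*} [Lattice D₁] [BoundedOrder D₁] [Lattice D₂] [BoundedOrder D₂]
    (att₁ : D₁ → D₁ → D₁) (att₂ : D₂ → D₂ → D₂)
    (hassoc₁ : ∀ d e f : D₁, att₁ (att₁ d e) f = att₁ d (att₁ e f))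
    (hcomm₁ : ∀ d e : D₁, att₁ d e = att₁ e d)
    (hmono₁ : ∀ d d' e e' : D₁, d ≤ d' → e ≤ e' → att₁ d e ≤ att₁ d' e')
    (htop₁ : ∀ d : D₁, att₁ d ⊤ = d)
    (hbot₁ : ∀ d : D₁, att₁ d ⊥ = ⊥)
    (hle₁ : ∀ d e : D₁, att₁ d e ≤ e)
    (hdistr₁ : ∀ d e₁ e₂ : D₁, att₁ d (e₁ ⊓ e₂) = att₁ d e₁ ⊓ att₁ d e₂)
    (hassoc₂ : ∀ d e f : D₂, att₂ (att₂ d e) f = att₂ d (att₂ e f))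
    (hcomm₂ : ∀ d e : D₂, att₂ d e = att₂ e d)
    (hmono₂ : ∀ d d' e e' : D₂, d ≤ d' → e ≤ e' → att₂ d e ≤ att₂ d' e')
    (htop₂ : ∀ d : D₂, att₂ d ⊤ = d)
    (hbot₂ : ∀ d : D₂, att₂ d ⊥ = ⊥)
    (hle₂ : ∀ d e : D₂, att₂ d e ≤ e)
    (hdistr₂ : ∀ d e₁ e₂ : D₂, att₂ d (e₁ ⊓ e₂) = att₂ d e₁ ⊓ att₂ d e₂)
    :
    let S : Set (D₁ × D₂) :=
      (({(⊥ : D₁)}ᶜ : Set D₁) ×ˢ ({(⊥ : D₂)}ᶜ : Set D₂)) ∪ {((⊥ : D₁), (⊥ : D₂))}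
    let spair : D₁ → D₂ → D₁ × D₂ := fun a b =>
      if a ≠ ⊥ ∧ b ≠ ⊥ then (a, b) else ((⊥ : D₁), (⊥ : D₂))
    ∀ d e : D₁ × D₂, d ∈ S → e ∈ S →
      spair (d.1 ⊓ e.1) (d.2 ⊓ e.2) ∈ S ∧
      spair (d.1 ⊓ e.1) (d.2 ⊓ e.2) ≤ d ∧
      spair (d.1 ⊓ e.1) (d.2 ⊓ e.2) ≤ e ∧
      (∀ x : D₁ × D₂, x ∈ S → x ≤ d → x ≤ e → x ≤ spair (d.1 ⊓ e.1) (d.2 ⊓ e.2)) :=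
  strictProduct_glb_general
end

section
/- Let ⟨D₁, ≤₁, ⊥₁, ⊤₁, ∘₁⟩ and ⟨D₂, ≤₂, ⊥₂, ⊤₂, ∘₂⟩ be qualification domains, and let S = ((D₁ \ {⊥₁}) × (D₂ \ {⊥₂})) ∪ {(⊥₁,⊥₂)} be the carrier of the strict cartesian product. For (d₁,d₂), (e₁,e₂) ∈ S, the componentwise join (d₁ ⊔₁ e₁, d₂ ⊔₂ e₂) belongs to S and is the least upper bound of {(d₁,d₂), (e₁,e₂)} within S with respect to the componentwise order. -/
/-!
A pair lies in the strict product exactly when its two components are `⊥` together, and a join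
is `⊥` exactly when both joinands are. Hence the strict product is closed under the
componentwise join, which is therefore also the least upper bound inside it.
-/

def strictProd (α β : Type*) [Bot α] [Bot β] : Set (α × β) :=
  (({⊥}ᶜ : Set α) ×ˢ ({⊥}ᶜ : Set β)) ∪ {(⊥, ⊥)}

theorem mem_strictProd_iff {α β : Type*} [Bot α] [Bot β] {x : α × β} :
    x ∈ strictProd α β ↔ (x.1 = ⊥ ↔ x.2 = ⊥) := by
  obtain ⟨a, b⟩ := x
  simp only [strictProd, Set.mem_union, Set.mem_prod, Set.mem_compl_singleton_iff,
    Set.mem_singleton_iff, Prod.mk.injEq]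
  tauto

theorem sup_mem_strictProd {α β : Type*} [SemilatticeSup α] [OrderBot α]
    [SemilatticeSup β] [OrderBot β] {d e : α × β}
    (hd : d ∈ strictProd α β) (he : e ∈ strictProd α β) : d ⊔ e ∈ strictProd α β := by
  rw [mem_strictProd_iff] at hd he ⊢
  rw [Prod.fst_sup, Prod.snd_sup, sup_eq_bot_iff, sup_eq_bot_iff, hd, he]

theorem strictProduct_lub_general
    {D₁ D₂ : Type*} [Lattice D₁] [BoundedOrder D₁] [Lattice D₂] [BoundedOrder D₂]
    :
    let S : Set (D₁ × D₂) :=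
      (({(⊥ : D₁)}ᶜ : Set D₁) ×ˢ ({(⊥ : D₂)}ᶜ : Set D₂)) ∪ {((⊥ : D₁), (⊥ : D₂))}
    ∀ d e : D₁ × D₂, d ∈ S → e ∈ S →
      ((d.1 ⊔ e.1, d.2 ⊔ e.2) : D₁ × D₂) ∈ S ∧
      d ≤ (d.1 ⊔ e.1, d.2 ⊔ e.2) ∧
      e ≤ (d.1 ⊔ e.1, d.2 ⊔ e.2) ∧
      (∀ x : D₁ × D₂, x ∈ S → d ≤ x → e ≤ x → (d.1 ⊔ e.1, d.2 ⊔ e.2) ≤ x) := by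
  intro S d e hd he
  exact ⟨sup_mem_strictProd hd he, le_sup_left, le_sup_right, fun _ _ => sup_le⟩

/-- In the strict cartesian product of two qualification domains,
the componentwise join is the least upper bound. -/
theorem strictProduct_lub
    {D₁ D₂ : Type*} [Lattice D₁] [BoundedOrder D₁] [Lattice D₂] [BoundedOrder D₂]
    (att₁ : D₁ → D₁ → D₁) (att₂ : D₂ → D₂ → D₂)
    (hassoc₁ : ∀ d e f : D₁, att₁ (att₁ d e) f = att₁ d (att₁ e f))
    (hcomm₁ : ∀ d e : D₁, att₁ d e = att₁ e d)
    (hmono₁ : ∀ d d' e e' : D₁, d ≤ d' → e ≤ e' → att₁ d e ≤ att₁ d' e')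
    (htop₁ : ∀ d : D₁, att₁ d ⊤ = d)
    (hbot₁ : ∀ d : D₁, att₁ d ⊥ = ⊥)
    (hle₁ : ∀ d e : D₁, att₁ d e ≤ e)
    (hdistr₁ : ∀ d e₁ e₂ : D₁, att₁ d (e₁ ⊓ e₂) = att₁ d e₁ ⊓ att₁ d e₂)
    (hassoc₂ : ∀ d e f : D₂, att₂ (att₂ d e) f = att₂ d (att₂ e f))
    (hcomm₂ : ∀ d e : D₂, att₂ d e = att₂ e d)
    (hmono₂ : ∀ d d' e e' : D₂, d ≤ d' → e ≤ e' → att₂ d e ≤ att₂ d' e')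
    (htop₂ : ∀ d : D₂, att₂ d ⊤ = d)
    (hbot₂ : ∀ d : D₂, att₂ d ⊥ = ⊥)
    (hle₂ : ∀ d e : D₂, att₂ d e ≤ e)
    (hdistr₂ : ∀ d e₁ e₂ : D₂, att₂ d (e₁ ⊓ e₂) = att₂ d e₁ ⊓ att₂ d e₂)
    :
    let S : Set (D₁ × D₂) :=
      (({(⊥ : D₁)}ᶜ : Set D₁) ×ˢ ({(⊥ : D₂)}ᶜ : Set D₂)) ∪ {((⊥ : D₁), (⊥ : D₂))}
    ∀ d e : D₁ × D₂, d ∈ S → e ∈ S →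
      ((d.1 ⊔ e.1, d.2 ⊔ e.2) : D₁ × D₂) ∈ S ∧
      d ≤ (d.1 ⊔ e.1, d.2 ⊔ e.2) ∧
      e ≤ (d.1 ⊔ e.1, d.2 ⊔ e.2) ∧
      (∀ x : D₁ × D₂, x ∈ S → d ≤ x → e ≤ x → (d.1 ⊔ e.1, d.2 ⊔ e.2) ≤ x) :=
  strictProduct_lub_general
end

section
/- Fix a first-order language L and a type V of variables, and suppose there exist at least two distinct ground terms in Term(L, ∅). Then for all terms t, s ∈ Term(L, V): if tη = sη for EVERY valuation η : V → Term(L, ∅), then t = s. (That is, the equivalence relation ≈_∅ of equality under all valuations coincides with syntactic equality of terms.) -/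
open FirstOrder Language

/-!
Induct on `t`. The only non-structural case is a variable `a` against a term `s`. If `s` is
another variable, a valuation sending the two to distinct ground terms separates them. If `s` is
compound and contains `a`, then `η a` would be a proper subterm of `s.subst η = η a`, which the
size of terms rules out (the occurs check). If `s` is compound and avoids `a`, redefining `η` at
`a` changes `(var a).subst η` but not `s.subst η`.
-/

namespace FirstOrder.Language.Term

variable {L : Language} {α β : Type*}

def size : L.Term α → ℕ
  | var _ => 1
  | func _ ts => ∑ i, (ts i).size + 1

theorem size_lt_size_func {l : ℕ} (f : L.Functions l) (ts : Fin l → L.Term α) (i : Fin l) :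
    (ts i).size < (func f ts).size :=
  Nat.lt_succ_of_le <| Finset.single_le_sum (fun j _ => Nat.zero_le (ts j).size) (Finset.mem_univ i)

section DecidableEq

variable [DecidableEq α]

theorem subst_congr {t : L.Term α} {η η' : α → L.Term β} (h : ∀ a ∈ t.varFinset, η a = η' a) :
    t.subst η = t.subst η' := by
  induction t with
  | var a => simpa using h
  | func f ts ih =>
    simp only [subst, func.injEq, heq_eq_eq, true_and]
    funext i
    exact ih i fun a ha => h a (Finset.mem_biUnion.2 ⟨i, Finset.mem_univ i, ha⟩)

theorem size_le_size_subst {t : L.Term α} {a : α} (ha : a ∈ t.varFinset) (η : α → L.Term β) :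
    (η a).size ≤ (t.subst η).size := by
  induction t with
  | var b => simp_all
  | func f ts ih =>
    obtain ⟨i, -, hi⟩ := Finset.mem_biUnion.1 ha
    exact (ih i hi).trans (size_lt_size_func f (fun i => (ts i).subst η) i).le

theorem subst_ne_of_mem_varFinset {l : ℕ} {f : L.Functions l} {ts : Fin l → L.Term α} {a : α}
    (ha : a ∈ (func f ts).varFinset) (η : α → L.Term β) : (func f ts).subst η ≠ η a := by
  obtain ⟨i, -, hi⟩ := Finset.mem_biUnion.1 ha
  have hlt := (size_le_size_subst hi η).trans_lt (size_lt_size_func f (fun i => (ts i).subst η) i)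
  exact hlt.ne' ∘ congrArg size

end DecidableEq

theorem var_eq_of_forall_subst_eq [Nontrivial (L.Term β)] {a : α} {s : L.Term α}
    (h : ∀ η : α → L.Term β, (var a).subst η = s.subst η) : var a = s := by
  classical
  obtain ⟨g₁, g₂, hne⟩ := exists_pair_ne (L.Term β)
  let η : α → L.Term β := Function.update (fun _ => g₂) a g₁
  cases s with
  | var b =>
    by_contra hab
    have hb : b ≠ a := fun hba => hab (congrArg var hba.symm)
    exact hne (by simpa [η, hb] using h η)
  | func f ts =>
    by_cases ha : a ∈ (func f ts).varFinset
    · exact absurd (h η).symm (subst_ne_of_mem_varFinset ha η)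
    · have hs : (func f ts).subst η = (func f ts).subst (fun _ => g₂) :=
        subst_congr fun b hb => Function.update_of_ne (ne_of_mem_of_not_mem hb ha) _ _
      exact absurd (by simpa [η] using (h η).trans (hs.trans (h _).symm)) hne

theorem eq_of_forall_subst_eq [Nontrivial (L.Term β)] {t s : L.Term α}
    (h : ∀ η : α → L.Term β, t.subst η = s.subst η) : t = s := by
  induction t generalizing s with
  | var a => exact var_eq_of_forall_subst_eq h
  | func f ts ih =>
    cases s with
    | var b => exact (var_eq_of_forall_subst_eq fun η => (h η).symm).symm
    | func f' ss =>
      obtain ⟨g⟩ : Nonempty (L.Term β) := inferInstance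
      injection h fun _ => g with hl hf
      subst hl
      obtain rfl := eq_of_heq hf
      refine congrArg (func f) (funext fun i => ih i fun η => ?_)
      have hη := h η
      simp only [subst, func.injEq, heq_eq_eq, true_and] at hη
      exact congrFun hη i

end FirstOrder.Language.Term

/-- If there are at least two distinct ground terms, then two
terms that agree under every valuation are syntactically equal
(`≈_∅` coincides with syntactic equality). -/
theorem eq_of_forall_valuation_eq {L : Language} {V : Type*}
    (hg : ∃ g₁ g₂ : L.Term Empty, g₁ ≠ g₂)
    (t s : L.Term V)
    (h : ∀ η : V → L.Term Empty, t.subst η = s.subst η) :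
    t = s := by
  have : Nontrivial (L.Term Empty) := ⟨hg⟩
  exact Term.eq_of_forall_subst_eq h
end

section
/- Fix a first-order language L, a type V of variables, and a lattice D with least element ⊥ and greatest element ⊤. Let ℛ assign to each pair of function symbols of L of the same arity an element of D, with ℛ(f,f) = ⊤ and ℛ(f,g) = ℛ(g,f). Let R̂ : Term(L,V) × Term(L,V) → D be the function defined by structural recursion by: R̂(X,X) = ⊤ for a variable X; R̂(X,Y) = ⊥ for distinct variables X, Y; R̂(X, c(s₁,…,sₘ)) = R̂(c(s₁,…,sₘ), X) = ⊥ for a variable X and function symbol c; R̂(c(t₁,…,tₙ), c'(s₁,…,sₘ)) = ⊥ when n ≠ m; and R̂(c(t₁,…,tₙ), c'(s₁,…,sₙ)) = ℛ(c,c') ⊓ R̂(t₁,s₁) ⊓ … ⊓ R̂(tₙ,sₙ) when the arities agree. For λ ∈ D with λ ≠ ⊥, write t ≈_λ s iff λ ≤ R̂(t,s). Then: (1) R̂(t,t) = ⊤ for every term t, so ≈_λ is reflexive; (2) R̂(t,s) = R̂(s,t) for all terms t, s, so ≈_λ is symmetric; (3) if moreover ℛ is transitive, i.e. ℛ(f,g)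 ⊓ ℛ(g,h) ≤ ℛ(f,h) for all same-arity function symbols f, g, h, then R̂(t,s) ⊓ R̂(s,u) ≤ R̂(t,u) for all terms t, s, u, so ≈_λ is transitive and hence an equivalence relation. -/
/-!
All three properties follow by structural induction on terms, comparing the terms clause by
clause. Terms of different shape, or headed by symbols of different arities, are at distance `⊥`,
which makes every mismatched case trivial. When the head symbols share an arity, the clause for
`R̂(c(t₁,…,tₙ), c'(s₁,…,sₙ))` reduces the claim to the same property of `ℛ` and of the
arguments; for transitivity one also uses that `⊓` commutes with the finite meet over them.
-/

namespace FirstOrder.Language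

variable {L : Language} {V D : Type*} [SemilatticeInf D] [BoundedOrder D]

structure IsCanonicalExtension (R : ∀ n, L.Functions n → L.Functions n → D)
    (Rhat : L.Term V → L.Term V → D) : Prop where
  var_var_self : ∀ X : V, Rhat (Term.var X) (Term.var X) = ⊤
  var_var_of_ne : ∀ X Y : V, X ≠ Y → Rhat (Term.var X) (Term.var Y) = ⊥
  var_func : ∀ (X : V) (m : ℕ) (c : L.Functions m) (ss : Fin m → L.Term V),
    Rhat (Term.var X) (Term.func c ss) = ⊥
  func_var : ∀ (X : V) (m : ℕ) (c : L.Functions m) (ss : Fin m → L.Term V),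
    Rhat (Term.func c ss) (Term.var X) = ⊥
  func_func_of_ne : ∀ (n m : ℕ), n ≠ m →
    ∀ (c : L.Functions n) (ts : Fin n → L.Term V) (c' : L.Functions m) (ss : Fin m → L.Term V),
      Rhat (Term.func c ts) (Term.func c' ss) = ⊥
  func_func : ∀ (n : ℕ) (c c' : L.Functions n) (ts ss : Fin n → L.Term V),
    Rhat (Term.func c ts) (Term.func c' ss) = R n c c' ⊓ Finset.univ.inf fun i => Rhat (ts i) (ss i)

namespace IsCanonicalExtension

variable {R : ∀ n, L.Functions n → L.Functions n → D} {Rhat : L.Term V → L.Term V → D}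

theorem self_eq_top (h : IsCanonicalExtension R Rhat) (hR : ∀ n (f : L.Functions n), R n f f = ⊤)
    (t : L.Term V) : Rhat t t = ⊤ := by
  induction t with
  | var X => exact h.var_var_self X
  | func c ts ih => simp [h.func_func, hR, ih]

theorem comm (h : IsCanonicalExtension R Rhat) (hR : ∀ n (f g : L.Functions n), R n f g = R n g f)
    (t s : L.Term V) : Rhat t s = Rhat s t := by
  induction t generalizing s with
  | var X =>
    cases s with
    | var Y =>
      obtain rfl | hXY := eq_or_ne X Y
      · rfl
      · rw [h.var_var_of_ne X Y hXY, h.var_var_of_ne Y X hXY.symm]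
    | func c ss => rw [h.var_func, h.func_var]
  | @func n c ts ih =>
    cases s with
    | var Y => rw [h.var_func, h.func_var]
    | @func m c' ss =>
      obtain rfl | hnm := eq_or_ne n m
      · simp only [h.func_func, hR n c c', ih]
      · rw [h.func_func_of_ne n m hnm, h.func_func_of_ne m n hnm.symm]

theorem func_inf_func_le (h : IsCanonicalExtension R Rhat)
    (hR : ∀ n (f g k : L.Functions n), R n f g ⊓ R n g k ≤ R n f k)
    {n : ℕ} (c c' c'' : L.Functions n) {ts ss us : Fin n → L.Term V}
    (ih : ∀ i, Rhat (ts i) (ss i) ⊓ Rhat (ss i) (us i) ≤ Rhat (ts i) (us i)) :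
    Rhat (Term.func c ts) (Term.func c' ss) ⊓ Rhat (Term.func c' ss) (Term.func c'' us) ≤
      Rhat (Term.func c ts) (Term.func c'' us) := by
  rw [h.func_func, h.func_func, h.func_func]
  calc _ = (R n c c' ⊓ R n c' c'') ⊓
        Finset.univ.inf ((fun i => Rhat (ts i) (ss i)) ⊓ fun i => Rhat (ss i) (us i)) := by
        rw [Finset.inf_inf]; ac_rfl
    _ ≤ _ := inf_le_inf (hR n c c' c'') (Finset.inf_mono_fun fun i _ => ih i)

theorem inf_le_trans (h : IsCanonicalExtension R Rhat)
    (hR : ∀ n (f g k : L.Functions n), R n f g ⊓ R n g k ≤ R n f k)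
    (t s u : L.Term V) : Rhat t s ⊓ Rhat s u ≤ Rhat t u := by
  induction t generalizing s u with
  | var X =>
    cases s with
    | var Y =>
      obtain rfl | hXY := eq_or_ne X Y
      · exact inf_le_right
      · simp [h.var_var_of_ne X Y hXY]
    | func c ss => simp [h.var_func]
  | @func n c ts ih =>
    cases s with
    | var Y => simp [h.func_var]
    | @func m c' ss =>
      obtain rfl | hnm := eq_or_ne n m
      · cases u with
        | var Z => simp [h.func_var]
        | @func k c'' us =>
          obtain rfl | hnk := eq_or_ne n k
          · exact h.func_inf_func_le hR c c' c'' fun i => ih i (ss i) (us i)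
          · simp [h.func_func_of_ne n k hnk]
      · simp [h.func_func_of_ne n m hnm]

end IsCanonicalExtension

end FirstOrder.Language

open FirstOrder Language

/-- Proximity Lemma: the canonical extension `R̂` of a `D`-valued
proximity relation `ℛ` on function symbols to terms yields relations `≈_λ`
(`λ ≤ R̂(t,s)`) that are reflexive and symmetric, and also transitive when `ℛ`
is transitive. -/
theorem proximity_extension_properties {L : Language} {V : Type*}
    {D : Type*} [Lattice D] [BoundedOrder D]
    (R : ∀ n, L.Functions n → L.Functions n → D)
    (hRrefl : ∀ n (f : L.Functions n), R n f f = ⊤)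
    (hRsymm : ∀ n (f g : L.Functions n), R n f g = R n g f)
    (Rhat : L.Term V → L.Term V → D)
    (hvarRefl : ∀ X : V, Rhat (Term.var X) (Term.var X) = ⊤)
    (hvarNe : ∀ X Y : V, X ≠ Y → Rhat (Term.var X) (Term.var Y) = ⊥)
    (hvarFunc : ∀ (X : V) (m : ℕ) (c : L.Functions m) (ss : Fin m → L.Term V),
      Rhat (Term.var X) (Term.func c ss) = ⊥ ∧ Rhat (Term.func c ss) (Term.var X) = ⊥)
    (hfuncNe : ∀ (n m : ℕ), n ≠ m →
      ∀ (c : L.Functions n) (ts : Fin n → L.Term V)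
        (c' : L.Functions m) (ss : Fin m → L.Term V),
      Rhat (Term.func c ts) (Term.func c' ss) = ⊥)
    (hfuncEq : ∀ (n : ℕ) (c c' : L.Functions n) (ts ss : Fin n → L.Term V),
      Rhat (Term.func c ts) (Term.func c' ss)
        = R n c c' ⊓ (Finset.univ : Finset (Fin n)).inf fun i => Rhat (ts i) (ss i)) :
    (∀ t : L.Term V, Rhat t t = ⊤) ∧
    (∀ t s : L.Term V, Rhat t s = Rhat s t) ∧
    ((∀ n (f g h : L.Functions n), R n f g ⊓ R n g h ≤ R n f h) →
      ∀ t s u : L.Term V, Rhat t s ⊓ Rhat s u ≤ Rhat t u) ∧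
    (∀ lam : D, lam ≠ ⊥ →
      (∀ t : L.Term V, lam ≤ Rhat t t) ∧
      (∀ t s : L.Term V, lam ≤ Rhat t s → lam ≤ Rhat s t) ∧
      ((∀ n (f g h : L.Functions n), R n f g ⊓ R n g h ≤ R n f h) →
        ∀ t s u : L.Term V, lam ≤ Rhat t s → lam ≤ Rhat s u → lam ≤ Rhat t u)) := by
  have hext : IsCanonicalExtension R Rhat :=
    ⟨hvarRefl, hvarNe, fun X _ c ss => (hvarFunc X _ c ss).1,
      fun X _ c ss => (hvarFunc X _ c ss).2, hfuncNe, hfuncEq⟩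
  refine ⟨hext.self_eq_top hRrefl, hext.comm hRsymm, hext.inf_le_trans, fun lam _ => ⟨?_, ?_, ?_⟩⟩
  · exact fun t => (hext.self_eq_top hRrefl t).symm ▸ le_top
  · exact fun t s hts => hext.comm hRsymm t s ▸ hts
  · exact fun hR t s u hts hsu => (le_inf hts hsu).trans (hext.inf_le_trans hR t s u)
end
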